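/- Let ε > 0 and let C, D be symmetric positive definite n×n matrices. Then (4/ε)·D^{1/2}·(I + (I + (16/ε²)·D^{1/2} C D^{1/2})^{1/2})^{−1}·D^{1/2} = I − (ε/4)·C^{−1/2}·(I + (4/ε)·C − (I + (16/ε²)·C^{1/2} D C^{1/2})^{1/2})·C^{−1/2}. -/

import Mathlib

/-! Put `t = 4 / ε`, `c = C^{1/2}`, `d = D^{1/2}` and `M = t • (c * d)`, so that
`Mᴴ * M = t² • (d * C * d)` and `M * Mᴴ = t² • (c * D * c)`. The two square roots are then linked by
`√(1 + M Mᴴ) = 1 + M (1 + √(1 + Mᴴ M))⁻¹ Mᴴ`: the right side is positive semidefinite and squares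
to `1 + M Mᴴ`, because `Mᴴ M = (1 + S)(S - 1)` for `S = √(1 + Mᴴ M)`. Substituting this and cancelling
`c` on both sides gives the identity. -/

open Matrix
open scoped Classical

noncomputable section

/-- The unique symmetric positive semidefinite square root of a positive
semidefinite matrix (junk value `0` otherwise). -/
def sqrtm {n : ℕ} (A : Matrix (Fin n) (Fin n) ℝ) : Matrix (Fin n) (Fin n) ℝ :=
  if h : A.PosSemidef then
    (h.1.eigenvectorUnitary : Matrix (Fin n) (Fin n) ℝ) *
      diagonal ((↑) ∘ (√·) ∘ h.1.eigenvalues) *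
      (star h.1.eigenvectorUnitary : Matrix (Fin n) (Fin n) ℝ)
  else 0

end

open scoped MatrixOrder

section

variable {n : ℕ}

lemma sqrtm_eq_cfcSqrt {A : Matrix (Fin n) (Fin n) ℝ} (hA : A.PosSemidef) :
    sqrtm A = CFC.sqrt A := by
  rw [sqrtm, dif_pos hA, CFC.sqrt_eq_cfc, cfc_nnreal_eq_real _ A, hA.1.cfc_eq, IsHermitian.cfc,
    Unitary.conjStarAlgAut_apply]
  congr 3
  funext i
  simp [Real.coe_sqrt, Real.coe_toNNReal', max_eq_left (hA.eigenvalues_nonneg i)]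

lemma posSemidef_sqrtm {A : Matrix (Fin n) (Fin n) ℝ} (hA : A.PosSemidef) :
    (sqrtm A).PosSemidef := by
  rw [sqrtm_eq_cfcSqrt hA]
  exact (CFC.sqrt_nonneg A).posSemidef

lemma sqrtm_mul_sqrtm {A : Matrix (Fin n) (Fin n) ℝ} (hA : A.PosSemidef) :
    sqrtm A * sqrtm A = A := by
  rw [sqrtm_eq_cfcSqrt hA]
  exact CFC.sqrt_mul_sqrt_self A hA.nonneg

lemma sqrtm_mul_self {B : Matrix (Fin n) (Fin n) ℝ} (hB : B.PosSemidef) :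
    sqrtm (B * B) = B := by
  have hBB : (B * B).PosSemidef := by
    simpa only [hB.1.eq] using posSemidef_conjTranspose_mul_self B
  rw [sqrtm_eq_cfcSqrt hBB]
  exact CFC.sqrt_mul_self B hB.nonneg

lemma isUnit_det_sqrtm {A : Matrix (Fin n) (Fin n) ℝ} (hA : A.PosDef) : IsUnit (sqrtm A).det :=
  (isUnit_iff_isUnit_det _).mp <|
    isUnit_of_mul_isUnit_left (sqrtm_mul_sqrtm hA.posSemidef ▸ hA.isUnit)

lemma sqrtm_one_add_mul_conjTranspose (M : Matrix (Fin n) (Fin n) ℝ) :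
    sqrtm (1 + M * Mᴴ) = 1 + M * (1 + sqrtm (1 + Mᴴ * M))⁻¹ * Mᴴ := by
  have hpsd : (1 + Mᴴ * M).PosSemidef := .add .one (posSemidef_conjTranspose_mul_self M)
  set S := sqrtm (1 + Mᴴ * M)
  have hSS : S * S = 1 + Mᴴ * M := sqrtm_mul_sqrtm hpsd
  have h1S : (1 + S).PosDef := .add_posSemidef .one (posSemidef_sqrtm hpsd)
  have h1Su : IsUnit (1 + S).det := (isUnit_iff_isUnit_det _).mp h1S.isUnit
  set N := (1 + S)⁻¹
  have hNl : (1 + S) * N = 1 := mul_nonsing_inv _ h1Su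
  have hNr : N * (1 + S) = 1 := nonsing_inv_mul _ h1Su
  have hMM : Mᴴ * M = (1 + S) * (S - 1) := by
    rw [← add_sub_cancel_left 1 (Mᴴ * M), ← hSS]; noncomm_ring
  have hsq : (1 + M * N * Mᴴ) * (1 + M * N * Mᴴ) = 1 + M * Mᴴ := calc
    _ = 1 + M * (N + N + N * (Mᴴ * M) * N) * Mᴴ := by noncomm_ring
    _ = 1 + M * ((1 + S) * N) * Mᴴ := by
      rw [hMM, ← mul_assoc N, hNr, one_mul]; noncomm_ring
    _ = 1 + M * Mᴴ := by rw [hNl, mul_one]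
  rw [← hsq, sqrtm_mul_self (.add .one (h1S.inv.posSemidef.mul_mul_conjTranspose_same M))]

lemma smul_conj_inv_one_add_sqrtm_eq {t : ℝ} (ht : t ≠ 0) {C D : Matrix (Fin n) (Fin n) ℝ}
    (hC : C.PosDef) (hD : D.PosSemidef) :
    t • (sqrtm D * (1 + sqrtm (1 + t ^ 2 • (sqrtm D * C * sqrtm D)))⁻¹ * sqrtm D) =
      1 - t⁻¹ • ((sqrtm C)⁻¹ * (1 + t • C - sqrtm (1 + t ^ 2 • (sqrtm C * D * sqrtm C))) *
        (sqrtm C)⁻¹) := by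
  set c := sqrtm C
  set d := sqrtm D
  have hcH : cᴴ = c := (posSemidef_sqrtm hC.posSemidef).1
  have hdH : dᴴ = d := (posSemidef_sqrtm hD).1
  have hcc : c * c = C := sqrtm_mul_sqrtm hC.posSemidef
  have hdd : d * d = D := sqrtm_mul_sqrtm hD
  set M := t • (c * d)
  have hMH : Mᴴ = t • (d * c) := by
    rw [conjTranspose_smul, conjTranspose_mul, hcH, hdH, star_trivial]
  have hMHM : Mᴴ * M = t ^ 2 • (d * C * d) := by
    rw [hMH, smul_mul_smul_comm, ← hcc, sq]; noncomm_ring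
  have hMMH : M * Mᴴ = t ^ 2 • (c * D * c) := by
    rw [hMH, smul_mul_smul_comm, ← hdd, sq]; noncomm_ring
  rw [← hMHM, ← hMMH, sqrtm_one_add_mul_conjTranspose]
  set N := (1 + sqrtm (1 + Mᴴ * M))⁻¹
  have hfactor : 1 + t • C - (1 + M * N * Mᴴ) = c * (t • 1 - t ^ 2 • (d * N * d)) * c := by
    rw [hMH, ← hcc, sq]; simp only [M]; noncomm_ring; simp only [smul_smul]
  have hconj (X : Matrix (Fin n) (Fin n) ℝ) : c⁻¹ * (c * X * c) * c⁻¹ = X := by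
    have hcu : IsUnit c.det := isUnit_det_sqrtm hC
    rw [mul_assoc c, ← mul_assoc c⁻¹, nonsing_inv_mul _ hcu, one_mul, mul_assoc,
      mul_nonsing_inv _ hcu, mul_one]
  rw [hfactor, hconj, smul_sub, smul_smul, smul_smul, inv_mul_cancel₀ ht, sq, ← mul_assoc,
    inv_mul_cancel₀ ht, one_mul, one_smul, sub_sub_cancel]

end

theorem stmt_10 {n : ℕ} (ε : ℝ) (hε : 0 < ε)
    (C D : Matrix (Fin n) (Fin n) ℝ) (hC : C.PosDef) (hD : D.PosDef) :
    (4 / ε) •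
        (sqrtm D * (1 + sqrtm (1 + (16 / ε ^ 2) • (sqrtm D * C * sqrtm D)))⁻¹ * sqrtm D) =
      1 - (ε / 4) •
        ((sqrtm C)⁻¹ * (1 + (4 / ε) • C - sqrtm (1 + (16 / ε ^ 2) • (sqrtm C * D * sqrtm C))) *
          (sqrtm C)⁻¹) := by
  have h16 : (4 / ε) ^ 2 = 16 / ε ^ 2 := by ring
  simpa only [h16, inv_div] using
    smul_conj_inv_one_add_sqrtm_eq (div_ne_zero four_ne_zero hε.ne') hC hD.posSemidef
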